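/- arXiv:2403.18429 — 2 statements merged into one kernel-verified Lean document; each statement's English description precedes it below -/
import Mathlib

section
/- There exists a finite simple connected graph G with at least two vertices such that μ(G) > max over all vertices v of G of √(4·m_v³/d_v). (This disproves conjectured vertex-maximum bound 15 of Brankov, Hansen and Stevanović.) -/
noncomputable section

open Finset

/-- The degree of a vertex, as a real number. -/
def degR {V : Type*} [Fintype V] (G : SimpleGraph V) (v : V) : ℝ :=
  letI := Classical.decRel G.Adj
  (G.degree v : ℝ)

/-- The average degree of the neighbours of a vertex, as a real number:
`m_v = (∑_{u ~ v} d_u) / d_v`. -/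
def avgDegR {V : Type*} [Fintype V] (G : SimpleGraph V) (v : V) : ℝ :=
  letI := Classical.decRel G.Adj
  (∑ u ∈ G.neighborFinset v, (G.degree u : ℝ)) / (G.degree v : ℝ)

/-- The largest eigenvalue of the Laplacian matrix `L = D - A` of a finite graph. -/
def lapSpecRad {V : Type*} [Fintype V] [DecidableEq V] [Nonempty V]
    (G : SimpleGraph V) : ℝ :=
  letI := Classical.decRel G.Adj
  ⨆ i, (SimpleGraph.posSemidef_lapMatrix ℝ G).isHermitian.eigenvalues i

/-!
The counterexample is the tree in which a hub is joined to ten vertices, each carrying two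
pendant leaves. Its vertex bounds `√(4 m_v³ / d_v)` are `√10.8` at the hub, `√(256/3)` at the
middle vertices and `√108` at the leaves. On the other hand `μ` dominates every Rayleigh quotient
of the Laplacian, and the vector equal to `9` at the hub, `-1` at the middle vertices and `0` at
the leaves has Rayleigh quotient `1020/91 > √108`.
-/

open Matrix MatrixOrder SimpleGraph

theorem Matrix.IsHermitian.dotProduct_mulVec_le_iSup_eigenvalues_mul {n : Type*} [Fintype n]
    [DecidableEq n] [Nonempty n] {A : Matrix n n ℝ} (hA : A.IsHermitian) (x : n → ℝ) :
    x ⬝ᵥ A *ᵥ x ≤ (⨆ i, hA.eigenvalues i) * (x ⬝ᵥ x) := by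
  have hle : A ≤ algebraMap ℝ (Matrix n n ℝ) (⨆ i, hA.eigenvalues i) := by
    refine le_algebraMap_of_spectrum_le (fun r hr => ?_) hA
    obtain ⟨i, rfl⟩ := hA.spectrum_real_eq_range_eigenvalues ▸ hr
    exact le_ciSup (Set.finite_range _).bddAbove i
  simpa [sub_mulVec, dotProduct_sub, Algebra.algebraMap_eq_smul_one, smul_mulVec, dotProduct_smul]
    using (le_iff.mp hle).dotProduct_mulVec_nonneg x

section

variable {V : Type*} [Fintype V] (G : SimpleGraph V) [DecidableRel G.Adj]

theorem dotProduct_lapMatrix_mulVec_le [DecidableEq V] [Nonempty V] (x : V → ℝ) :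
    x ⬝ᵥ G.lapMatrix ℝ *ᵥ x ≤ lapSpecRad G * (x ⬝ᵥ x) := by
  unfold lapSpecRad
  convert (posSemidef_lapMatrix ℝ G).isHermitian.dotProduct_mulVec_le_iSup_eigenvalues_mul x

theorem degR_eq (v : V) : degR G v = G.degree v := by
  unfold degR; congr!

theorem avgDegR_eq (v : V) :
    avgDegR G v = (∑ u ∈ G.neighborFinset v, (G.degree u : ℝ)) / G.degree v := by
  unfold avgDegR; congr!

theorem four_mul_avgDegR_pow_three_div_degR_le {B : ℕ} (v : V)
    (h : 4 * (∑ u ∈ G.neighborFinset v, G.degree u) ^ 3 ≤ B * G.degree v ^ 4) :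
    4 * avgDegR G v ^ 3 / degR G v ≤ B := by
  rw [avgDegR_eq, degR_eq]
  rcases (G.degree v).eq_zero_or_pos with hd | hd
  · simp [hd]
  · have hd' : (0 : ℝ) < G.degree v := by exact_mod_cast hd
    rw [div_pow, mul_div_assoc', div_div, ← pow_succ, div_le_iff₀ (by positivity)]
    exact_mod_cast h

end

theorem connected_fromRel_of_iterate_eq {V : Type*} [Nonempty V] (p : V → V) (r : V)
    (h : ∀ v, ∃ k, p^[k] v = r) : (fromRel fun a b => p a = b).Connected := by
  have step : ∀ v, (fromRel fun a b => p a = b).Reachable v (p v) := fun v => by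
    by_cases hv : v = p v
    · rw [← hv]
    · exact (fromRel_adj _ _ _ |>.mpr ⟨hv, .inl rfl⟩).reachable
  have iterate : ∀ k v, (fromRel fun a b => p a = b).Reachable v (p^[k] v) := fun k => by
    induction k with
    | zero => exact fun _ => .rfl
    | succ k ih => exact fun v => (step v).trans (ih (p v))
  have toRoot : ∀ v, (fromRel fun a b => p a = b).Reachable v r := fun v => by
    obtain ⟨k, hk⟩ := h v
    exact hk ▸ iterate k v
  exact .mk fun u v => (toRoot u).trans (toRoot v).symm

-- Vertex `0` is the hub, `1, …, 10` are the middle vertices and `11, …, 30` the leaves.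
def treeParent (v : Fin 31) : Fin 31 :=
  if v ≤ 10 then 0 else ⟨(v - 11) / 2 + 1, by omega⟩

abbrev counterexampleTree : SimpleGraph (Fin 31) := fromRel fun a b => treeParent a = b

theorem counterexampleTree_connected : counterexampleTree.Connected :=
  connected_fromRel_of_iterate_eq treeParent 0 fun v => ⟨2, by revert v; decide⟩

theorem counterexampleTree_degree_bound (v : Fin 31) :
    4 * (∑ u ∈ counterexampleTree.neighborFinset v, counterexampleTree.degree u) ^ 3
      ≤ 108 * counterexampleTree.degree v ^ 4 := by
  revert v; decide

def testVector (v : Fin 31) : ℤ := if v = 0 then 9 else if v ≤ 10 then -1 else 0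

theorem testVector_dotProduct_lapMatrix_mulVec :
    (fun v => (testVector v : ℝ)) ⬝ᵥ counterexampleTree.lapMatrix ℝ *ᵥ (fun v => (testVector v : ℝ))
      = 1020 := by
  rw [← toLinearMap₂'_apply', lapMatrix_toLinearMap₂']
  have h : (∑ i, ∑ j, if counterexampleTree.Adj i j then (testVector i - testVector j) ^ 2 else 0)
      = 2040 := by decide
  rw [div_eq_iff two_ne_zero]
  exact_mod_cast h

theorem testVector_dotProduct_self :
    (fun v => (testVector v : ℝ)) ⬝ᵥ (fun v => (testVector v : ℝ)) = 91 := by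
  have h : ∑ v, testVector v * testVector v = 91 := by decide
  simp only [dotProduct]
  exact_mod_cast h

theorem lapSpecRad_counterexampleTree_ge : 1020 / 91 ≤ lapSpecRad counterexampleTree := by
  have h := dotProduct_lapMatrix_mulVec_le counterexampleTree fun v => (testVector v : ℝ)
  rw [testVector_dotProduct_lapMatrix_mulVec, testVector_dotProduct_self] at h
  rw [div_le_iff₀ (by norm_num)]; exact h

/-- There exists a finite simple connected graph `G` with at least two vertices whose
Laplacian spectral radius exceeds the conjectured vertex-maximum bound. -/
theorem exists_counterexample_bound15 :
    ∃ (V : Type) (_ : Fintype V) (_ : DecidableEq V) (_ : Nonempty V)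
      (G : SimpleGraph V), G.Connected ∧ 2 ≤ Fintype.card V ∧
      ∀ v : V, (fun d m => Real.sqrt (4 * m ^ 3 / d)) (degR G v) (avgDegR G v) < lapSpecRad G := by
  refine ⟨Fin 31, inferInstance, inferInstance, inferInstance, counterexampleTree,
    counterexampleTree_connected, by simp, fun v => ?_⟩
  have hbound := four_mul_avgDegR_pow_three_div_degR_le _ v (counterexampleTree_degree_bound v)
  calc √(4 * avgDegR counterexampleTree v ^ 3 / degR counterexampleTree v)
      ≤ √108 := Real.sqrt_le_sqrt (by exact_mod_cast hbound)
    _ < 1020 / 91 := by rw [Real.sqrt_lt' (by norm_num)]; norm_num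
    _ ≤ lapSpecRad counterexampleTree := lapSpecRad_counterexampleTree_ge
end
end

section
/- There exists a finite simple connected graph G with at least two vertices such that μ(G) > max over all vertices v of G of √(2·m_v⁴/d_v² + 2·d_v·m_v). (This disproves conjectured vertex-maximum bound 28 of Brankov, Hansen and Stevanović.) -/
/-!
A vertex `v` adjacent to all others forces `μ(G) ≥ n = |V|`: since `L 𝟙 = 0` and
`L eᵥ = n eᵥ - 𝟙`, the vector `n eᵥ - 𝟙` is an eigenvector for `n`. In the cone over a
`k`-regular graph on `N` vertices the apex has `d = N`, `m = k + 1`, and every other vertex has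
`d = k + 1`, `m = (N + k (k + 1)) / (k + 1)`. For the square of the `16`-cycle (`N = 16`, `k = 4`)
the squared bound is `≈ 164.9` at the apex and `≈ 287.0` elsewhere, both below `17² = 289`.
-/

noncomputable section

open Finset

open Matrix

namespace SimpleGraph

variable {V : Type*} [Fintype V] (G : SimpleGraph V)

theorem degR_eq_degree [DecidableRel G.Adj] (v : V) : degR G v = G.degree v := by
  unfold degR
  congr!

theorem avgDegR_eq [DecidableRel G.Adj] (v : V) :
    avgDegR G v = (∑ u ∈ G.neighborFinset v, (G.degree u : ℝ)) / G.degree v := by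
  unfold avgDegR
  congr!

variable [DecidableEq V] [DecidableRel G.Adj]

theorem le_lapSpecRad_of_mulVec_eq_smul [Nonempty V] {μ : ℝ} {x : V → ℝ} (hx : x ≠ 0)
    (h : G.lapMatrix ℝ *ᵥ x = μ • x) : μ ≤ lapSpecRad G := by
  have hL := (posSemidef_lapMatrix ℝ G).isHermitian
  have hμ : μ ∈ spectrum ℝ (G.lapMatrix ℝ) := by
    rw [← spectrum_toLin']
    exact Module.End.HasEigenvalue.mem_spectrum <|
      Module.End.hasEigenvalue_of_hasEigenvector ⟨Module.End.mem_eigenspace_iff.mpr h, hx⟩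
  obtain ⟨i, rfl⟩ := hL.spectrum_real_eq_range_eigenvalues ▸ hμ
  refine (le_ciSup (Set.finite_range hL.eigenvalues).bddAbove i).trans_eq ?_
  unfold lapSpecRad
  congr!

variable {G}

theorem IsUniversal.lapMatrix_mulVec_single {v : V} (hv : G.IsUniversal v) :
    G.lapMatrix ℝ *ᵥ Pi.single v 1 = Pi.single v (Fintype.card V : ℝ) - 1 := by
  ext w
  rw [lapMatrix_mulVec_apply, sum_pi_single']
  rcases eq_or_ne w v with rfl | hwv
  · have hcard : 1 ≤ Fintype.card V := Fintype.card_pos_iff.2 ⟨w⟩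
    simp [(degree_eq_card_sub_one G w).2 hv, Nat.cast_sub hcard]
  · simp [hwv, (hv hwv.symm).symm]

theorem IsUniversal.lapMatrix_mulVec_eq_smul {v : V} (hv : G.IsUniversal v) :
    G.lapMatrix ℝ *ᵥ (Pi.single v (Fintype.card V : ℝ) - 1) =
      (Fintype.card V : ℝ) • (Pi.single v (Fintype.card V : ℝ) - 1) := by
  have hsingle : Pi.single v (Fintype.card V : ℝ) = (Fintype.card V : ℝ) • Pi.single v 1 := by
    rw [← Pi.single_smul, smul_eq_mul, mul_one]
  rw [mulVec_sub, hsingle, mulVec_smul, hv.lapMatrix_mulVec_single, ← hsingle,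
    show (1 : V → ℝ) = fun _ ↦ 1 from rfl, lapMatrix_mulVec_const_eq_zero, sub_zero]

theorem IsUniversal.card_le_lapSpecRad [Nonempty V] {v : V} (hv : G.IsUniversal v)
    (hcard : 1 < Fintype.card V) : (Fintype.card V : ℝ) ≤ lapSpecRad G := by
  refine G.le_lapSpecRad_of_mulVec_eq_smul (fun h ↦ ?_) hv.lapMatrix_mulVec_eq_smul
  have hv0 := congrFun h v
  simp only [Pi.sub_apply, Pi.single_eq_same, Pi.one_apply, Pi.zero_apply, sub_eq_zero] at hv0
  exact hcard.ne' (mod_cast hv0)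

section Cone

variable {W : Type*} (H : SimpleGraph W)

def cone : SimpleGraph (Option W) where
  Adj
    | none, none => False
    | none, some _ | some _, none => True
    | some a, some b => H.Adj a b
  symm := ⟨by rintro (_ | a) (_ | b) <;> simp [H.adj_comm]⟩
  loopless := ⟨by rintro (_ | a) <;> simp⟩

@[simp] theorem cone_adj_none_some (w : W) : (cone H).Adj none (some w) := trivial

@[simp] theorem cone_adj_some_none (w : W) : (cone H).Adj (some w) none := trivial

@[simp] theorem cone_adj_some_some {a b : W} : (cone H).Adj (some a) (some b) ↔ H.Adj a b :=
  Iff.rfl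

instance [DecidableRel H.Adj] : DecidableRel (cone H).Adj
  | none, none => inferInstanceAs (Decidable False)
  | none, some _ | some _, none => inferInstanceAs (Decidable True)
  | some a, some b => inferInstanceAs (Decidable (H.Adj a b))

theorem isUniversal_cone_none : (cone H).IsUniversal none := by
  rintro (_ | w) h
  · exact (h rfl).elim
  · trivial

variable [Fintype W] [DecidableRel H.Adj]

theorem neighborFinset_cone_none : (cone H).neighborFinset none = univ.map .some := by
  ext (_ | w) <;> simp

theorem neighborFinset_cone_some (w : W) :
    (cone H).neighborFinset (some w) =
      cons none ((H.neighborFinset w).map .some) (by simp) := by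
  ext (_ | u) <;> simp

theorem degree_cone_none : (cone H).degree none = Fintype.card W := by
  rw [← card_neighborFinset_eq_degree, neighborFinset_cone_none, card_map, card_univ]

theorem degree_cone_some (w : W) : (cone H).degree (some w) = H.degree w + 1 := by
  rw [← card_neighborFinset_eq_degree, neighborFinset_cone_some, card_cons, card_map,
    card_neighborFinset_eq_degree]

variable {H} {k : ℕ}

theorem IsRegularOfDegree.degree_cone_some (hH : H.IsRegularOfDegree k) (w : W) :
    (cone H).degree (some w) = k + 1 := by
  rw [SimpleGraph.degree_cone_some, hH.degree_eq]

theorem IsRegularOfDegree.avgDegR_cone_none [Nonempty W] (hH : H.IsRegularOfDegree k) :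
    avgDegR (cone H) none = k + 1 := by
  rw [avgDegR_eq, neighborFinset_cone_none, sum_map, Function.Embedding.some_apply,
    sum_congr rfl fun u _ ↦ congrArg Nat.cast (hH.degree_cone_some u), sum_const, card_univ,
    nsmul_eq_mul, degree_cone_none, mul_div_cancel_left₀ _ (by positivity)]
  push_cast
  ring

theorem IsRegularOfDegree.avgDegR_cone_some (hH : H.IsRegularOfDegree k) (w : W) :
    avgDegR (cone H) (some w) = (Fintype.card W + k * (k + 1)) / (k + 1) := by
  rw [avgDegR_eq, neighborFinset_cone_some, sum_cons, sum_map, Function.Embedding.some_apply,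
    sum_congr rfl fun u _ ↦ congrArg Nat.cast (hH.degree_cone_some u), sum_const,
    card_neighborFinset_eq_degree, hH.degree_eq, nsmul_eq_mul, degree_cone_none,
    hH.degree_cone_some]
  push_cast
  ring

end Cone

end SimpleGraph

open SimpleGraph

/-- There exists a finite simple connected graph `G` with at least two vertices whose
Laplacian spectral radius exceeds the conjectured vertex-maximum bound. -/
theorem exists_counterexample_bound28 :
    ∃ (V : Type) (_ : Fintype V) (_ : DecidableEq V) (_ : Nonempty V)
      (G : SimpleGraph V), G.Connected ∧ 2 ≤ Fintype.card V ∧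
      ∀ v : V, (fun d m => Real.sqrt (2 * m ^ 4 / d ^ 2 + 2 * d * m)) (degR G v) (avgDegR G v) < lapSpecRad G := by
  have hreg : (circulantGraph ({1, 2} : Set (ZMod 16))).IsRegularOfDegree 4 := by
    unfold IsRegularOfDegree
    decide
  refine ⟨Option (ZMod 16), inferInstance, inferInstance, inferInstance,
    cone (circulantGraph {1, 2}), .of_isUniversal (isUniversal_cone_none _), by simp,
    fun v ↦ ?_⟩
  refine lt_of_lt_of_le ?_ ((isUniversal_cone_none _).card_le_lapSpecRad (by simp))
  rw [Real.sqrt_lt' (by positivity)]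
  cases v with
  | none => rw [degR_eq_degree, degree_cone_none, hreg.avgDegR_cone_none]; norm_num
  | some w => rw [degR_eq_degree, hreg.degree_cone_some, hreg.avgDegR_cone_some]; norm_num
end
end
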